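/- Let n ≥ 2, w ∈ 𝔻, B_w(z) = ((z−w)/(1−w̄z))ⁿ, and let M(z) = e^{iβ}z be a rotation. If M ∘ B_w ∘ M^{−1} = B_{w'} for some w' ∈ 𝔻, then e^{i(n−1)β} = 1 and w' = e^{iβ}w; i.e., two normalized unicritical Blaschke products B_w and B_{w'} are conjugate by a rotation only if w' = ζw for some (n−1)-th root of unity ζ. -/

import Mathlib

/-!
Evaluating the conjugacy at `e^{iβ} w` kills the left-hand side, so `B_{w'}` vanishes there and
`w' = e^{iβ} w`. With this, `B_w(e^{-iβ} z) = e^{-inβ} B_{w'}(z)`, so the conjugacy reads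
`e^{-i(n-1)β} B_{w'} = B_{w'}` on the disk, and `B_{w'}` does not vanish away from `w'`.
-/

open Complex ComplexConjugate

noncomputable def blaschkeFactor (a z : ℂ) : ℂ := (z - a) / (1 - conj a * z)

lemma one_sub_conj_mul_ne_zero {a z : ℂ} (ha : ‖a‖ < 1) (hz : ‖z‖ ≤ 1) :
    1 - conj a * z ≠ 0 := by
  intro h
  have hnorm : ‖conj a * z‖ = 1 := by rw [← sub_eq_zero.mp h, norm_one]
  rw [norm_mul, Complex.norm_conj] at hnorm
  nlinarith [norm_nonneg a, norm_nonneg z]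

lemma blaschkeFactor_pow_eq_zero_iff {a z : ℂ} {n : ℕ} (hn : n ≠ 0) (ha : ‖a‖ < 1)
    (hz : ‖z‖ ≤ 1) : blaschkeFactor a z ^ n = 0 ↔ z = a := by
  rw [pow_eq_zero_iff hn, blaschkeFactor, div_eq_zero_iff, sub_eq_zero,
    or_iff_left (one_sub_conj_mul_ne_zero ha hz)]

lemma blaschkeFactor_inv_mul {u : ℂ} (hu : ‖u‖ = 1) (a z : ℂ) :
    blaschkeFactor a (u⁻¹ * z) = u⁻¹ * blaschkeFactor (u * a) z := by
  have hu0 : u ≠ 0 := norm_ne_zero_iff.mp (by rw [hu]; exact one_ne_zero)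
  rw [blaschkeFactor, blaschkeFactor, map_mul, ← Complex.inv_eq_conj hu, mul_div_assoc']
  congr 1
  · field_simp
  · ring

lemma exists_norm_lt_one_ne (a : ℂ) : ∃ z : ℂ, ‖z‖ < 1 ∧ z ≠ a := by
  by_cases ha : a = 0
  · exact ⟨1 / 2, by norm_num, by rw [ha]; norm_num⟩
  · exact ⟨0, by simp, Ne.symm ha⟩

lemma pow_pred_eq_one_of_mul_inv_pow_eq_one {e : ℂ} {n : ℕ} (hn : n ≠ 0) (he : e ≠ 0)
    (h : e * e⁻¹ ^ n = 1) : e ^ (n - 1) = 1 :=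
  calc e ^ (n - 1) = e ^ (n - 1) * (e * e⁻¹ ^ n) := by rw [h, mul_one]
    _ = 1 := by
      rw [← mul_assoc, ← pow_succ, Nat.sub_add_cancel (Nat.one_le_iff_ne_zero.mpr hn),
        ← mul_pow, mul_inv_cancel₀ he, one_pow]

theorem stmt_17 (n : ℕ) (hn : 2 ≤ n) (w w' : ℂ)
    (hw : ‖w‖ < 1) (hw' : ‖w'‖ < 1) (β : ℝ)
    (Bw Bw' : ℂ → ℂ)
    (hBw : Bw = fun z => ((z - w) / (1 - (starRingEnd ℂ) w * z)) ^ n)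
    (hBw' : Bw' = fun z => ((z - w') / (1 - (starRingEnd ℂ) w' * z)) ^ n)
    (hconj : ∀ z : ℂ, ‖z‖ < 1 →
        Complex.exp (β * I) * Bw (Complex.exp (-β * I) * z) = Bw' z) :
    Complex.exp (((n : ℂ) - 1) * β * I) = 1 ∧ w' = Complex.exp (β * I) * w := by
  set e := Complex.exp (β * I)
  have hn0 : n ≠ 0 := by omega
  have he : ‖e‖ = 1 := norm_exp_ofReal_mul_I β
  have hconj' : ∀ z : ℂ, ‖z‖ < 1 →
      e * (e⁻¹ ^ n * blaschkeFactor (e * w) z ^ n) = blaschkeFactor w' z ^ n := by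
    intro z hz
    have h := hconj z hz
    rw [hBw, hBw', neg_mul, Complex.exp_neg] at h
    rw [← mul_pow, ← blaschkeFactor_inv_mul he]
    exact h
  have hew : ‖e * w‖ < 1 := by rwa [norm_mul, he, one_mul]
  have hw'_eq : w' = e * w := by
    have h := hconj' (e * w) hew
    rw [(blaschkeFactor_pow_eq_zero_iff hn0 hew hew.le).mpr rfl, mul_zero, mul_zero,
      eq_comm, blaschkeFactor_pow_eq_zero_iff hn0 hw' hew.le] at h
    exact h.symm
  refine ⟨?_, hw'_eq⟩
  obtain ⟨z, hz, hzw'⟩ := exists_norm_lt_one_ne w'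
  have hB : blaschkeFactor w' z ^ n ≠ 0 :=
    mt (blaschkeFactor_pow_eq_zero_iff hn0 hw' hz.le).mp hzw'
  have h := hconj' z hz
  rw [← hw'_eq, ← mul_assoc] at h
  have hpow := pow_pred_eq_one_of_mul_inv_pow_eq_one hn0 (Complex.exp_ne_zero _)
    (mul_eq_right₀ hB |>.mp h)
  calc Complex.exp (((n : ℂ) - 1) * β * I) = Complex.exp (((n - 1 : ℕ) : ℂ) * (β * I)) := by
        rw [Nat.cast_sub (by omega), Nat.cast_one, mul_assoc]
    _ = e ^ (n - 1) := Complex.exp_nat_mul _ _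
    _ = 1 := hpow
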